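/- Broadcast versus reach: For any information graph G = (V, E, α) and any vertex v ∈ V, the broadcast satisfies β(G) ≥ (reach_G(v))², i.e., for all distinct vertices u, w, prox_G(u, w) ≥ reach_G(v)². Consequently, for any instance (G, k), the optimum single-source reach Υ* (for any source vertex) and the optimum broadcast β* achievable by adding at most k edges satisfy Υ* ≤ √(β*). -/

import Mathlib

open scoped Classical

variable {V : Type*} [Fintype V] [DecidableEq V]

/-- The proximity of `u` and `v` in the information graph `(V, E, α)`: the probability
that `u` and `v` are connected in a graph obtained by retaining each edge of `E`
independently with probability `α`. -/
noncomputable def prox (E : Finset (Sym2 V)) (α : ℝ) (u v : V) : ℝ :=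
  ∑ F ∈ E.powerset,
    if (SimpleGraph.fromEdgeSet (F : Set (Sym2 V))).Reachable u v then
      α ^ F.card * (1 - α) ^ (E \ F).card
    else 0

/-- The broadcast of an information graph: the minimum proximity over pairs of distinct
vertices. -/
noncomputable def broadcast (E : Finset (Sym2 V)) (α : ℝ) : ℝ :=
  ⨅ p : {p : V × V // p.1 ≠ p.2}, prox E α p.1.1 p.1.2

/-- The optimum broadcast achievable by adding at most `k` vertex pairs disjoint from `E`. -/
noncomputable def optBroadcast (E : Finset (Sym2 V)) (α : ℝ) (k : ℕ) : ℝ :=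
  ⨆ F : {F : Finset (Sym2 V) // F.card ≤ k ∧ ∀ e ∈ F, e ∉ E}, broadcast (E ∪ F.1) α

/-- The reach of a vertex `v`: the minimum proximity of `v` to any other vertex. -/
noncomputable def reach (E : Finset (Sym2 V)) (α : ℝ) (v : V) : ℝ :=
  ⨅ u : {u : V // u ≠ v}, prox E α v u.1

/-- The optimum reach of a source vertex `vs` achievable by adding at most `k`
vertex pairs disjoint from `E`. -/
noncomputable def optReach (E : Finset (Sym2 V)) (α : ℝ) (k : ℕ) (vs : V) : ℝ :=
  ⨆ F : {F : Finset (Sym2 V) // F.card ≤ k ∧ ∀ e ∈ F, e ∉ E}, reach (E ∪ F.1) α vs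

/-- The probability that, in a sampled graph, all edges of at least one member of the
family `P` of edge-lists are retained. -/
noncomputable def prPaths (E : Finset (Sym2 V)) (α : ℝ) (P : Set (List (Sym2 V))) : ℝ :=
  ∑ F ∈ E.powerset,
    if ∃ p ∈ P, ∀ e ∈ p, e ∈ F then α ^ F.card * (1 - α) ^ (E \ F).card
    else 0

/-!
Reachability between two fixed vertices is an increasing event in the sampled edge set, and the
product measure is modular on the lattice of subsets of `E`, so the Harris (FKG) inequality gives
`prox v u * prox v w ≤ P(v ~ u ∧ v ~ w) ≤ prox u w`. Both factors are at least `reach v` (for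
`u = v` because `prox v v = 1`), hence `reach v ^ 2 ≤ prox u w`; the bound on the optima follows
by passing to the infimum over pairs and the supremum over added edge sets.
-/

section Sampling

variable {ι : Type*} [DecidableEq ι] {E : Finset ι} {α : ℝ}

/-- The probability that the sampled edge set is exactly `F`; meaningful only for `F ⊆ E`. -/
noncomputable def sampleWeight (E : Finset ι) (α : ℝ) (F : Finset ι) : ℝ :=
  α ^ F.card * (1 - α) ^ (E \ F).card

noncomputable def eventProb (E : Finset ι) (α : ℝ) (P : Finset ι → Prop) [DecidablePred P] :
    ℝ :=
  ∑ F ∈ E.powerset, if P F then sampleWeight E α F else 0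

lemma sampleWeight_nonneg (hα0 : 0 ≤ α) (hα1 : α ≤ 1) (F : Finset ι) :
    0 ≤ sampleWeight E α F :=
  mul_nonneg (pow_nonneg hα0 _) (pow_nonneg (sub_nonneg.2 hα1) _)

lemma sum_sampleWeight (E : Finset ι) (α : ℝ) :
    ∑ F ∈ E.powerset, sampleWeight E α F = 1 := by
  simpa [sampleWeight] using (Finset.prod_add (fun _ ↦ α) (fun _ ↦ 1 - α) E).symm

lemma sampleWeight_mul_sampleWeight (s t : Finset ι) :
    sampleWeight E α s * sampleWeight E α t =
      sampleWeight E α (s ∩ t) * sampleWeight E α (s ∪ t) := by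
  have hcard := Finset.card_inter_add_card_union s t
  have hcard_compl := Finset.card_inter_add_card_union (E \ s) (E \ t)
  rw [← Finset.sdiff_union_distrib, ← Finset.sdiff_inter_distrib_right] at hcard_compl
  simp only [sampleWeight]
  calc α ^ s.card * (1 - α) ^ (E \ s).card * (α ^ t.card * (1 - α) ^ (E \ t).card)
      = α ^ (s.card + t.card) * (1 - α) ^ ((E \ s).card + (E \ t).card) := by ring
    _ = _ := by rw [← hcard, ← hcard_compl]; ring

lemma eventProb_nonneg (hα0 : 0 ≤ α) (hα1 : α ≤ 1) (P : Finset ι → Prop)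
    [DecidablePred P] :
    0 ≤ eventProb E α P :=
  Finset.sum_nonneg fun F _ ↦ by
    split_ifs
    exacts [sampleWeight_nonneg hα0 hα1 F, le_rfl]

lemma eventProb_mono (hα0 : 0 ≤ α) (hα1 : α ≤ 1) {P Q : Finset ι → Prop}
    [DecidablePred P] [DecidablePred Q] (hPQ : ∀ F, P F → Q F) :
    eventProb E α P ≤ eventProb E α Q :=
  Finset.sum_le_sum fun F _ ↦ by
    by_cases hP : P F
    · simp [hP, hPQ F hP]
    · simp only [hP, if_false]
      split_ifs
      exacts [sampleWeight_nonneg hα0 hα1 F, le_rfl]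

lemma eventProb_le_one (hα0 : 0 ≤ α) (hα1 : α ≤ 1) (P : Finset ι → Prop)
    [DecidablePred P] :
    eventProb E α P ≤ 1 := by
  calc eventProb E α P ≤ eventProb E α fun _ ↦ True :=
        eventProb_mono hα0 hα1 fun _ _ ↦ trivial
    _ = 1 := by simpa [eventProb] using sum_sampleWeight E α

/-- **Harris inequality**: increasing events are positively correlated. -/
theorem eventProb_mul_le_eventProb_and (hα0 : 0 ≤ α) (hα1 : α ≤ 1) {P Q : Finset ι → Prop}
    [DecidablePred P] [DecidablePred Q]
    (hP : Monotone P) (hQ : Monotone Q) :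
    eventProb E α P * eventProb E α Q ≤ eventProb E α fun F ↦ P F ∧ Q F := by
  have hw := sampleWeight_nonneg (E := E) hα0 hα1
  have key := E.four_functions_theorem (𝒜 := E.powerset) (ℬ := E.powerset)
    (f₁ := fun F ↦ if P F then sampleWeight E α F else 0)
    (f₂ := fun F ↦ if Q F then sampleWeight E α F else 0)
    (f₃ := sampleWeight E α)
    (f₄ := fun F ↦ if P F ∧ Q F then sampleWeight E α F else 0)
    (fun F ↦ ite_nonneg (hw F) le_rfl) (fun F ↦ ite_nonneg (hw F) le_rfl) hw
    (fun F ↦ ite_nonneg (hw F) le_rfl)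
    (fun s _ t _ ↦ by
      by_cases hst : P s ∧ Q t
      · have hunion : P (s ∪ t) ∧ Q (s ∪ t) :=
          ⟨hP Finset.subset_union_left hst.1, hQ Finset.subset_union_right hst.2⟩
        simp only [hst.1, hst.2, hunion, if_true, and_self]
        exact (sampleWeight_mul_sampleWeight s t).le
      · rcases not_and_or.1 hst with hs | ht
        · simp only [hs, if_false, zero_mul]
          exact mul_nonneg (hw _) (ite_nonneg (hw _) le_rfl)
        · simp only [ht, if_false, mul_zero]
          exact mul_nonneg (hw _) (ite_nonneg (hw _) le_rfl))
    subset_rfl subset_rfl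
  simpa [sum_sampleWeight, eventProb] using key

end Sampling

lemma monotone_reachable_fromEdgeSet {W : Type*} (u w : W) :
    Monotone fun F : Finset (Sym2 W) ↦
      (SimpleGraph.fromEdgeSet (F : Set (Sym2 W))).Reachable u w :=
  fun _ _ hFG h ↦ h.mono (SimpleGraph.fromEdgeSet_mono (Finset.coe_subset.2 hFG))

section Proximity

variable {E : Finset (Sym2 V)} {α : ℝ}

lemma prox_eq_eventProb (E : Finset (Sym2 V)) (α : ℝ) (u w : V) :
    prox E α u w =
      eventProb E α fun F ↦ (SimpleGraph.fromEdgeSet (F : Set (Sym2 V))).Reachable u w :=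
  rfl

lemma prox_nonneg (hα0 : 0 ≤ α) (hα1 : α ≤ 1) (u w : V) : 0 ≤ prox E α u w :=
  eventProb_nonneg hα0 hα1 _

lemma prox_self (E : Finset (Sym2 V)) (α : ℝ) (u : V) : prox E α u u = 1 := by
  simpa [prox_eq_eventProb, eventProb] using sum_sampleWeight E α

lemma prox_le_one (hα0 : 0 ≤ α) (hα1 : α ≤ 1) (u w : V) : prox E α u w ≤ 1 :=
  eventProb_le_one hα0 hα1 _

theorem prox_mul_prox_le (hα0 : 0 ≤ α) (hα1 : α ≤ 1) (v u w : V) :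
    prox E α v u * prox E α v w ≤ prox E α u w :=
  calc prox E α v u * prox E α v w
      ≤ eventProb E α (fun F ↦ (SimpleGraph.fromEdgeSet (F : Set (Sym2 V))).Reachable v u ∧
          (SimpleGraph.fromEdgeSet (F : Set (Sym2 V))).Reachable v w) :=
        eventProb_mul_le_eventProb_and hα0 hα1 (monotone_reachable_fromEdgeSet v u)
          (monotone_reachable_fromEdgeSet v w)
    _ ≤ prox E α u w := eventProb_mono hα0 hα1 fun _ h ↦ h.1.symm.trans h.2

lemma reach_nonneg (hα0 : 0 ≤ α) (hα1 : α ≤ 1) (v : V) : 0 ≤ reach E α v :=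
  Real.iInf_nonneg fun u ↦ prox_nonneg hα0 hα1 v u.1

lemma reach_le_one (hα0 : 0 ≤ α) (hα1 : α ≤ 1) (v : V) : reach E α v ≤ 1 := by
  rcases isEmpty_or_nonempty {u : V // u ≠ v} with h | ⟨⟨u, hu⟩⟩
  · simp [reach]
  · exact (ciInf_le (Finite.bddBelow_range _) ⟨u, hu⟩).trans (prox_le_one hα0 hα1 v u)

lemma reach_le_prox (hα0 : 0 ≤ α) (hα1 : α ≤ 1) (v u : V) : reach E α v ≤ prox E α v u := by
  rcases eq_or_ne u v with rfl | hu
  · exact (prox_self E α u).symm ▸ reach_le_one hα0 hα1 u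
  · exact ciInf_le (Finite.bddBelow_range _) (⟨u, hu⟩ : {u : V // u ≠ v})

theorem sq_reach_le_prox (hα0 : 0 ≤ α) (hα1 : α ≤ 1) (v u w : V) :
    reach E α v ^ 2 ≤ prox E α u w :=
  calc reach E α v ^ 2 = reach E α v * reach E α v := sq _
    _ ≤ prox E α v u * prox E α v w :=
      mul_le_mul (reach_le_prox hα0 hα1 v u) (reach_le_prox hα0 hα1 v w)
        (reach_nonneg hα0 hα1 v) (prox_nonneg hα0 hα1 v u)
    _ ≤ prox E α u w := prox_mul_prox_le hα0 hα1 v u w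

theorem sq_reach_le_broadcast (hα0 : 0 ≤ α) (hα1 : α ≤ 1) (v : V) :
    reach E α v ^ 2 ≤ broadcast E α := by
  rcases isEmpty_or_nonempty {p : V × V // p.1 ≠ p.2} with h | h
  · have : IsEmpty {u : V // u ≠ v} := ⟨fun u ↦ h.false ⟨(u.1, v), u.2⟩⟩
    simp [broadcast, reach]
  · exact le_ciInf fun p ↦ sq_reach_le_prox hα0 hα1 v p.1.1 p.1.2

theorem reach_le_sqrt_broadcast (hα0 : 0 ≤ α) (hα1 : α ≤ 1) (v : V) :
    reach E α v ≤ √(broadcast E α) :=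
  (le_abs_self _).trans (Real.abs_le_sqrt (sq_reach_le_broadcast hα0 hα1 v))

theorem optReach_le_sqrt_optBroadcast (hα0 : 0 ≤ α) (hα1 : α ≤ 1) (v : V) (k : ℕ) :
    optReach E α k v ≤ √(optBroadcast E α k) := by
  have : Nonempty {F : Finset (Sym2 V) // F.card ≤ k ∧ ∀ e ∈ F, e ∉ E} := ⟨⟨∅, by simp⟩⟩
  have hbdd : BddAbove <| Set.range
      fun F : {F : Finset (Sym2 V) // F.card ≤ k ∧ ∀ e ∈ F, e ∉ E} ↦ broadcast (E ∪ F.1) α :=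
    Finite.bddAbove_range _
  exact ciSup_le fun F ↦ (reach_le_sqrt_broadcast hα0 hα1 v).trans
    (Real.sqrt_le_sqrt (le_ciSup hbdd F))

end Proximity

/-- broadcast versus reach: `β(G) ≥ reach_G(v)²` pairwise, and the
optimum reach is at most the square root of the optimum broadcast. -/
theorem broadcast_vs_reach
    (E : Finset (Sym2 V)) (α : ℝ) (hα0 : 0 ≤ α) (hα1 : α ≤ 1)
    (v : V) (k : ℕ) :
    (∀ u w : V, u ≠ w → (reach E α v) ^ 2 ≤ prox E α u w) ∧
    optReach E α k v ≤ Real.sqrt (optBroadcast E α k) :=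
  ⟨fun u w _ ↦ sq_reach_le_prox hα0 hα1 v u w, optReach_le_sqrt_optBroadcast hα0 hα1 v k⟩
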